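/- Let m = x_{i_1}⋯x_{i_r} be a monomial in weakly increasing factorization and let 1 ≤ j ≤ n. If there exists t with i_t ≥ j, let s be minimal such; then the colon (Borel(m) : x_j) equals Borel(m / x_{i_s}). If j > i_r, then (Borel(m) : x_j) = Borel(m). -/

import Mathlib

/-!
For sorted lists, the entrywise Borel order `v ⪯ m` amounts to `card m ≤ card v` together with
`#{x ∈ m | x < z} ≤ #{x ∈ v | x < z}` for every threshold `z`. In these terms, `x_j · v ⪯ m` is
equivalent to `v ⪯ m / x_c` when `x_c` is the smallest variable of `m` with `j ≤ c`, and to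
`v ⪯ m` when every variable of `m` is below `j`. A generator of `Borel(m)` dividing `x_j w` either
contains `x_j`, and removing it gives a generator of the colon dividing `w`, or already divides `w`.
-/

/-- Borel order: `m1` precedes `m2`. -/
def BorelLe (m1 m2 : Multiset ℕ) : Prop :=
  Multiset.card m2 ≤ Multiset.card m1 ∧
    ∀ j < Multiset.card m2,
      (m1.sort (· ≤ ·)).getD j 0 ≤ (m2.sort (· ≤ ·)).getD j 0

/-- `x` is in the principal Borel ideal `Borel(m)`. -/
def BorelMem (m x : Multiset ℕ) : Prop := ∃ v, BorelLe v m ∧ v ≤ x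

theorem List.Pairwise.getD_lt_iff_lt_countP {l : List ℕ} (hl : l.Pairwise (· ≤ ·)) {t : ℕ}
    (ht : t < l.length) (z : ℕ) : l.getD t 0 < z ↔ t < l.countP (· < z) := by
  induction l generalizing t with
  | nil => simp at ht
  | cons a l ih =>
    rw [List.pairwise_cons] at hl
    by_cases haz : a < z
    · cases t with
      | zero => simp [haz]
      | succ t => simpa [haz] using ih hl.2 (Nat.lt_of_succ_lt_succ ht)
    · have hge : ∀ x ∈ a :: l, z ≤ x := by
        simpa [not_lt.1 haz] using fun x hx => (not_lt.1 haz).trans (hl.1 x hx)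
      have hmem : (a :: l).getD t 0 ∈ a :: l := by
        rw [List.getD_eq_getElem _ _ ht]; exact List.getElem_mem ht
      have h0 : (a :: l).countP (· < z) = 0 :=
        List.countP_eq_zero.2 fun x hx => by simpa using hge x hx
      simp only [h0, Nat.not_lt_zero, iff_false, not_lt]
      exact hge _ hmem

namespace Multiset

theorem countP_sort {α : Type*} (r : α → α → Prop) [DecidableRel r] [IsTrans α r]
    [Std.Antisymm r] [Std.Total r] (p : α → Prop) [DecidablePred p] (s : Multiset α) :
    (s.sort r).countP (p ·) = countP p s := by
  conv_rhs => rw [← sort_eq s r]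
  rw [coe_countP]

theorem countP_le_countP_of_imp {α : Type*} {p q : α → Prop} [DecidablePred p] [DecidablePred q]
    {s : Multiset α} (h : ∀ x ∈ s, p x → q x) : countP p s ≤ countP q s :=
  Quotient.inductionOn s (fun l h => by simpa using List.countP_mono_left (by simpa using h)) h

end Multiset

open Multiset

theorem borelLe_iff_countP {v m : Multiset ℕ} :
    BorelLe v m ↔ card m ≤ card v ∧ ∀ z, countP (· < z) m ≤ countP (· < z) v := by
  have ha := pairwise_sort v (· ≤ ·)
  have hb := pairwise_sort m (· ≤ ·)
  simp only [BorelLe, ← countP_sort (· ≤ ·), ← length_sort (r := (· ≤ ·))]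
  refine and_congr_right fun hcard => ⟨fun h z => ?_, fun h t ht => ?_⟩
  · refine forall_lt_iff_le.1 fun t ht => ?_
    have htb : t < (m.sort (· ≤ ·)).length := ht.trans_le (List.countP_le_length)
    rw [← hb.getD_lt_iff_lt_countP htb] at ht
    exact (ha.getD_lt_iff_lt_countP (htb.trans_le hcard) z).1 ((h t htb).trans_lt ht)
  · rw [← Nat.lt_succ_iff, ha.getD_lt_iff_lt_countP (ht.trans_le hcard)]
    exact ((hb.getD_lt_iff_lt_countP ht _).1 (Nat.lt_succ_self _)).trans_le (h _)

theorem borelLe_of_le {u v : Multiset ℕ} (h : u ≤ v) : BorelLe v u :=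
  borelLe_iff_countP.2 ⟨card_le_card h, fun _ => countP_le_of_le _ h⟩

theorem BorelLe.trans {u v w : Multiset ℕ} (huv : BorelLe u v) (hvw : BorelLe v w) :
    BorelLe u w := by
  rw [borelLe_iff_countP] at *
  exact ⟨hvw.1.trans huv.1, fun z => (hvw.2 z).trans (huv.2 z)⟩

theorem BorelLe.cons_cons {v m : Multiset ℕ} {j c : ℕ} (hjc : j ≤ c) (h : BorelLe v m) :
    BorelLe (j ::ₘ v) (c ::ₘ m) := by
  rw [borelLe_iff_countP] at *
  refine ⟨by simpa using h.1, fun z => ?_⟩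
  have hz := h.2 z
  simp only [countP_cons]
  split_ifs <;> omega

theorem borelLe_cons_cons_iff {v m : Multiset ℕ} {j c : ℕ} (hjc : j ≤ c)
    (hmin : ∀ x ∈ m, j ≤ x → c ≤ x) : BorelLe (j ::ₘ v) (c ::ₘ m) ↔ BorelLe v m := by
  refine ⟨fun h => ?_, BorelLe.cons_cons hjc⟩
  rw [borelLe_iff_countP] at *
  simp only [card_cons, countP_cons] at h
  refine ⟨by omega, fun z => ?_⟩
  by_cases hz : j < z ∧ z ≤ c
  · -- below such a threshold `z`, minimality of `c` leaves only variables of `m` below `j`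
    calc countP (· < z) m ≤ countP (· < j) m :=
          countP_le_countP_of_imp fun x hx hxz =>
            not_le.1 fun hjx => (hmin x hx hjx).not_gt (hxz.trans_le hz.2)
      _ ≤ countP (· < j) v := by simpa [not_lt.2 hjc] using h.2 j
      _ ≤ countP (· < z) v := countP_le_countP_of_imp fun x _ hx => hx.trans hz.1
  · have hmv := h.2 z
    split_ifs at hmv <;> omega

theorem borelLe_cons_iff_of_forall_lt {v m : Multiset ℕ} {j : ℕ} (hm : ∀ x ∈ m, x < j) :
    BorelLe (j ::ₘ v) m ↔ BorelLe v m := by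
  refine ⟨fun h => ?_, (borelLe_of_le (le_cons_self v j)).trans⟩
  rw [borelLe_iff_countP] at *
  have hcard : card m ≤ countP (· < j) v := calc
    card m = countP (· < j) m := (countP_eq_card.2 hm).symm
    _ ≤ countP (· < j) (j ::ₘ v) := h.2 j
    _ = countP (· < j) v := by simp
  refine ⟨hcard.trans (countP_le_card _ _), fun z => ?_⟩
  rcases le_or_gt z j with hzj | hjz
  · simpa [countP_cons, not_lt.2 hzj] using h.2 z
  · exact (countP_le_card _ _).trans
      (hcard.trans (countP_le_countP_of_imp fun x _ hx => hx.trans hjz))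

theorem setOf_borelMem_cons_eq {m m' : Multiset ℕ} {j : ℕ} (hle : m' ≤ m)
    (hcolon : ∀ v, BorelLe (j ::ₘ v) m ↔ BorelLe v m') :
    {w | BorelMem m (j ::ₘ w)} = {w | BorelMem m' w} := by
  ext w
  constructor
  · rintro ⟨v, hvm, hvw⟩
    by_cases hj : j ∈ v
    · rw [← cons_erase hj] at hvm hvw
      exact ⟨v.erase j, (hcolon _).1 hvm, (cons_le_cons_iff j).1 hvw⟩
    · exact ⟨v, hvm.trans (borelLe_of_le hle), (le_cons_of_notMem hj).1 hvw⟩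
  · rintro ⟨v, hvm', hvw⟩
    exact ⟨j ::ₘ v, (hcolon v).2 hvm', cons_le_cons j hvw⟩

theorem borel_colon_general (m : Multiset ℕ) (j : ℕ) :
    (∀ c ∈ m, j ≤ c → (∀ t ∈ m, j ≤ t → c ≤ t) →
      {w : Multiset ℕ | BorelMem m (j ::ₘ w)} = {w : Multiset ℕ | BorelMem (m.erase c) w}) ∧
    ((∀ t ∈ m, t < j) →
      {w : Multiset ℕ | BorelMem m (j ::ₘ w)} = {w : Multiset ℕ | BorelMem m w}) := by
  refine ⟨fun c hc hjc hmin => setOf_borelMem_cons_eq (erase_le c m) fun v => ?_,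
    fun hlt => setOf_borelMem_cons_eq le_rfl fun _ => borelLe_cons_iff_of_forall_lt hlt⟩
  conv_lhs => rw [← cons_erase hc]
  exact borelLe_cons_cons_iff hjc fun x hx => hmin x (mem_of_mem_erase hx)

/-- Colon of a principal Borel ideal by a variable.  If `c = x_{i_s}` is the
smallest variable of `m` with index `≥ j`, then `(Borel(m) : x_j) =
Borel(m / x_{i_s})`; if every variable of `m` has index `< j`, then
`(Borel(m) : x_j) = Borel(m)`. -/
theorem borel_colon (m : Multiset ℕ) (j : ℕ) (hm : ∀ x ∈ m, 1 ≤ x) (hj : 1 ≤ j) :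
    (∀ c ∈ m, j ≤ c → (∀ t ∈ m, j ≤ t → c ≤ t) →
      {w : Multiset ℕ | BorelMem m (j ::ₘ w)} = {w : Multiset ℕ | BorelMem (m.erase c) w}) ∧
    ((∀ t ∈ m, t < j) →
      {w : Multiset ℕ | BorelMem m (j ::ₘ w)} = {w : Multiset ℕ | BorelMem m w}) :=
  borel_colon_general m j
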